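/- Let φ: (M³,g) → (N²,h) be a submersive semi-conformal map with unit vertical vector field U, θ = U♭, Ω = dθ, and let μ be the mean curvature vector of the fibres. Define the 2-form Ω̃ by Ω̃(E,F) = −g(U, [HE, HF]) for vector fields E, F, where H denotes horizontal projection. Then Ω = Ω̃ − μ♭ ∧ θ. -/

import Mathlib

open scoped BigOperators

noncomputable section

/-- Partial derivative of `f` in the `i`-th coordinate direction. -/
def pd {n : ℕ} (f : (Fin n → ℝ) → ℝ) (i : Fin n) (x : Fin n → ℝ) : ℝ :=
  fderiv ℝ f x (Pi.single i 1)

/-- Pointwise inverse of a metric (the components `g^{ij}`). -/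
def ginv {n : ℕ} (g : (Fin n → ℝ) → Matrix (Fin n) (Fin n) ℝ) (x : Fin n → ℝ) :
    Matrix (Fin n) (Fin n) ℝ := (g x)⁻¹

/-- A smooth Riemannian metric in coordinates. -/
def IsMetric {n : ℕ} (g : (Fin n → ℝ) → Matrix (Fin n) (Fin n) ℝ) : Prop :=
  (∀ i j, ContDiff ℝ (⊤ : ℕ∞) fun x => g x i j) ∧ ∀ x, (g x).IsSymm ∧ (g x).PosDef

/-- A smooth vector field (or componentwise-smooth family). -/
def SmoothVF {n : ℕ} (X : (Fin n → ℝ) → Fin n → ℝ) : Prop :=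
  ∀ k, ContDiff ℝ (⊤ : ℕ∞) fun x => X x k

/-- Christoffel symbols `Γ^k_{ij}` of the metric `g`. -/
def christoffel {n : ℕ} (g : (Fin n → ℝ) → Matrix (Fin n) (Fin n) ℝ)
    (k i j : Fin n) (x : Fin n → ℝ) : ℝ :=
  (1 / 2) * ∑ l, ginv g x k l *
    (pd (fun y => g y l j) i x + pd (fun y => g y l i) j x - pd (fun y => g y i j) l x)

/-- Covariant derivative `(∇_X Y)^k` of the Levi-Civita connection of `g`. -/
def covD {n : ℕ} (g : (Fin n → ℝ) → Matrix (Fin n) (Fin n) ℝ)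
    (X Y : (Fin n → ℝ) → Fin n → ℝ) (x : Fin n → ℝ) (k : Fin n) : ℝ :=
  (∑ i, X x i * pd (fun y => Y y k) i x) + ∑ i, ∑ j, christoffel g k i j x * X x i * Y x j

/-- The Lie bracket of vector fields, `[X,Y]^k = X^i ∂_i Y^k - Y^i ∂_i X^k`. -/
def bracket {n : ℕ} (X Y : (Fin n → ℝ) → Fin n → ℝ) (x : Fin n → ℝ) (k : Fin n) : ℝ :=
  ∑ i, (X x i * pd (fun y => Y y k) i x - Y x i * pd (fun y => X y k) i x)

/-- `φ : (M³,g) → (N²,h)` is semi-conformal with dilation `λ`, in the local-coordinate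
characterization `g^{ij} φ^α_i φ^β_j = λ² h^{αβ}`. -/
def SemiConformal (g : (Fin 3 → ℝ) → Matrix (Fin 3) (Fin 3) ℝ)
    (h : (Fin 2 → ℝ) → Matrix (Fin 2) (Fin 2) ℝ)
    (φ : (Fin 3 → ℝ) → Fin 2 → ℝ) (lam : (Fin 3 → ℝ) → ℝ) : Prop :=
  ∀ x α β, (∑ i, ∑ j, ginv g x i j * pd (fun y => φ y α) i x * pd (fun y => φ y β) j x)
    = lam x ^ 2 * ginv h (φ x) α β

/-- A vector field is vertical when it lies in `ker dφ`. -/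
def Vertical (φ : (Fin 3 → ℝ) → Fin 2 → ℝ) (U : (Fin 3 → ℝ) → Fin 3 → ℝ) : Prop :=
  ∀ x α, (∑ i, pd (fun y => φ y α) i x * U x i) = 0

/-- A vector field of unit length for `g`. -/
def UnitField (g : (Fin 3 → ℝ) → Matrix (Fin 3) (Fin 3) ℝ)
    (U : (Fin 3 → ℝ) → Fin 3 → ℝ) : Prop :=
  ∀ x, (∑ i, ∑ j, g x i j * U x i * U x j) = 1

/-- The dual 1-form `X♭ = g(X,·)`. -/
def flat (g : (Fin 3 → ℝ) → Matrix (Fin 3) (Fin 3) ℝ)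
    (X : (Fin 3 → ℝ) → Fin 3 → ℝ) (j : Fin 3) (x : Fin 3 → ℝ) : ℝ :=
  ∑ k, g x j k * X x k

/-- Horizontal projection (relative to the unit vertical field `U`):
`H X = X - g(X,U) U`. -/
def Hproj (g : (Fin 3 → ℝ) → Matrix (Fin 3) (Fin 3) ℝ)
    (U X : (Fin 3 → ℝ) → Fin 3 → ℝ) (x : Fin 3 → ℝ) (k : Fin 3) : ℝ :=
  X x k - (∑ i, ∑ j, g x i j * X x i * U x j) * U x k

/-- The mean curvature vector `μ = ∇_U U` of the fibres (`U` the unit vertical field). -/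
def meanCurv (g : (Fin 3 → ℝ) → Matrix (Fin 3) (Fin 3) ℝ)
    (U : (Fin 3 → ℝ) → Fin 3 → ℝ) (x : Fin 3 → ℝ) (k : Fin 3) : ℝ :=
  covD g U U x k

/-- Lie derivative of the metric: `(L_E g)_{ij} = E^k ∂_k g_{ij} + g_{kj} ∂_i E^k + g_{ik} ∂_j E^k`. -/
def lieD {n : ℕ} (g : (Fin n → ℝ) → Matrix (Fin n) (Fin n) ℝ)
    (E : (Fin n → ℝ) → Fin n → ℝ) (i j : Fin n) (x : Fin n → ℝ) : ℝ :=
  (∑ k, E x k * pd (fun y => g y i j) k x)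
    + (∑ k, g x k j * pd (fun y => E y k) i x)
    + ∑ k, g x i k * pd (fun y => E y k) j x

/-!
Write `E = HE + θ(E) U` and `F = HF + θ(F) U`. Since `θ` vanishes on horizontal fields, Cartan's
formula `dθ(X,Y) = X θ(Y) - Y θ(X) - θ([X,Y])` gives `dθ(HE,HF) = -θ([HE,HF])`, and `g` being
symmetric this is `Ω̃(E,F)`. For the mixed terms one uses `ι_U dθ = μ♭`, where `μ = ∇_U U`.
Expanding `dθ(E,F)` bilinearly and using that `dθ` is alternating gives the formula.
-/
open Finset

section Coordinates

variable {n : ℕ} {x : Fin n → ℝ}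

lemma pd_const (c : ℝ) (i : Fin n) : pd (fun _ => c) i x = 0 := by
  simp [pd]

lemma pd_mul {f f' : (Fin n → ℝ) → ℝ} (hf : DifferentiableAt ℝ f x)
    (hf' : DifferentiableAt ℝ f' x) (i : Fin n) :
    pd (fun y => f y * f' y) i x = pd f i x * f' x + f x * pd f' i x := by
  simp only [pd, fderiv_fun_mul hf hf', add_apply, smul_apply, smul_eq_mul]
  ring

lemma pd_sum {ι : Type*} {s : Finset ι} {f : ι → (Fin n → ℝ) → ℝ}
    (hf : ∀ k ∈ s, DifferentiableAt ℝ (f k) x) (i : Fin n) :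
    pd (fun y => ∑ k ∈ s, f k y) i x = ∑ k ∈ s, pd (f k) i x := by
  simp [pd, fderiv_fun_sum hf]

lemma pd_sum_mul {ω : Fin n → (Fin n → ℝ) → ℝ} {X : (Fin n → ℝ) → Fin n → ℝ}
    (hω : ∀ j, DifferentiableAt ℝ (ω j) x) (hX : ∀ j, DifferentiableAt ℝ (fun y => X y j) x)
    (i : Fin n) :
    pd (fun y => ∑ j, ω j y * X y j) i x =
      ∑ j, (pd (ω j) i x * X x j + ω j x * pd (fun y => X y j) i x) := by
  rw [pd_sum (f := fun j y => ω j y * X y j) fun j _ => (hω j).fun_mul (hX j)]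
  exact sum_congr rfl fun j _ => pd_mul (hω j) (hX j) i

def extDerivOneForm (ω : Fin n → (Fin n → ℝ) → ℝ) (x : Fin n → ℝ) :
    (Fin n → ℝ) →ₗ[ℝ] (Fin n → ℝ) →ₗ[ℝ] ℝ :=
  Matrix.toLinearMap₂' ℝ (Matrix.of fun i j => pd (ω j) i x - pd (ω i) j x)

lemma extDerivOneForm_apply (ω : Fin n → (Fin n → ℝ) → ℝ) (X Y : Fin n → ℝ) :
    extDerivOneForm ω x X Y = ∑ i, ∑ j, X i * Y j * (pd (ω j) i x - pd (ω i) j x) := by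
  simp [extDerivOneForm, Matrix.toLinearMap₂'_apply, mul_assoc]

lemma isAlt_extDerivOneForm (ω : Fin n → (Fin n → ℝ) → ℝ) : (extDerivOneForm ω x).IsAlt := by
  intro X
  have h : extDerivOneForm ω x X X = -extDerivOneForm ω x X X := by
    rw [extDerivOneForm_apply]
    conv_lhs => rw [sum_comm]
    simp only [← sum_neg_distrib]
    exact sum_congr rfl fun _ _ => sum_congr rfl fun _ _ => by ring
  linarith

lemma extDerivOneForm_eq_sub_sub_bracket {ω : Fin n → (Fin n → ℝ) → ℝ}
    {X Y : (Fin n → ℝ) → Fin n → ℝ}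
    (hω : ∀ j, DifferentiableAt ℝ (ω j) x) (hX : ∀ j, DifferentiableAt ℝ (fun y => X y j) x)
    (hY : ∀ j, DifferentiableAt ℝ (fun y => Y y j) x) :
    extDerivOneForm ω x (X x) (Y x) =
      ∑ i, X x i * pd (fun y => ∑ j, ω j y * Y y j) i x
        - ∑ i, Y x i * pd (fun y => ∑ j, ω j y * X y j) i x
        - ∑ j, ω j x * bracket X Y x j := by
  have hXY : ∑ i, X x i * ∑ j, pd (ω j) i x * Y x j =
      ∑ i, ∑ j, X x i * Y x j * pd (ω j) i x := by
    simp only [mul_sum]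
    exact sum_congr rfl fun _ _ => sum_congr rfl fun _ _ => by ring
  have hYX : ∑ i, Y x i * ∑ j, pd (ω j) i x * X x j =
      ∑ i, ∑ j, X x i * Y x j * pd (ω i) j x := by
    simp only [mul_sum]
    rw [sum_comm]
    exact sum_congr rfl fun _ _ => sum_congr rfl fun _ _ => by ring
  have hbr : ∑ j, ω j x * bracket X Y x j =
      ∑ i, X x i * ∑ j, ω j x * pd (fun y => Y y j) i x
        - ∑ i, Y x i * ∑ j, ω j x * pd (fun y => X y j) i x := by
    simp only [bracket, mul_sum, ← sum_sub_distrib]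
    rw [sum_comm]
    exact sum_congr rfl fun _ _ => sum_congr rfl fun _ _ => by ring
  simp only [extDerivOneForm_apply, pd_sum_mul hω hX, pd_sum_mul hω hY, mul_add, sum_add_distrib,
    hXY, hYX, hbr, mul_sub, sum_sub_distrib]
  ring

end Coordinates

lemma sum_mul_christoffel {n : ℕ} {g : (Fin n → ℝ) → Matrix (Fin n) (Fin n) ℝ} {x : Fin n → ℝ}
    (hdet : IsUnit (g x).det) (k i j : Fin n) :
    ∑ l, g x k l * christoffel g l i j x = 1 / 2 *
      (pd (fun y => g y k j) i x + pd (fun y => g y k i) j x - pd (fun y => g y i j) k x) := by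
  set B : Fin n → ℝ := fun m =>
    pd (fun y => g y m j) i x + pd (fun y => g y m i) j x - pd (fun y => g y i j) m x
  have hΓ : ∀ l, christoffel g l i j x = 1 / 2 * (ginv g x).mulVec B l := fun l => rfl
  simp only [hΓ, mul_left_comm _ (1 / 2 : ℝ), ← mul_sum]
  change 1 / 2 * (g x).mulVec ((ginv g x).mulVec B) k = 1 / 2 * B k
  rw [Matrix.mulVec_mulVec, ginv, Matrix.mul_nonsing_inv _ hdet, Matrix.one_mulVec]

lemma LinearMap.IsAlt.apply_add_smul_apply_add_smul {R M : Type*} [CommRing R] [AddCommGroup M]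
    [Module R M] {B : M →ₗ[R] M →ₗ[R] R} (H : B.IsAlt) (X Y u : M) (a b : R) :
    B (X + a • u) (Y + b • u) = B X Y + a * B u Y - b * B u X := by
  simp only [map_add, map_smul, LinearMap.add_apply, LinearMap.smul_apply, smul_eq_mul,
    H.self_eq_zero, ← H.neg X u]
  ring

lemma SmoothVF.differentiableAt {n : ℕ} {X : (Fin n → ℝ) → Fin n → ℝ} (hX : SmoothVF X)
    (k : Fin n) (x : Fin n → ℝ) : DifferentiableAt ℝ (fun y => X y k) x :=
  ((hX k).differentiable (by simp)).differentiableAt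

lemma IsMetric.differentiableAt {n : ℕ} {g : (Fin n → ℝ) → Matrix (Fin n) (Fin n) ℝ}
    (hg : IsMetric g) (i j : Fin n) (x : Fin n → ℝ) : DifferentiableAt ℝ (fun y => g y i j) x :=
  ((hg.1 i j).differentiable (by simp)).differentiableAt

lemma sum_flat_mul (g : (Fin 3 → ℝ) → Matrix (Fin 3) (Fin 3) ℝ) (U : (Fin 3 → ℝ) → Fin 3 → ℝ)
    (x : Fin 3 → ℝ) (Z : Fin 3 → ℝ) :
    ∑ j, flat g U j x * Z j = ∑ i, ∑ j, g x i j * Z i * U x j := by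
  simp only [flat, sum_mul]
  exact sum_congr rfl fun _ _ => sum_congr rfl fun _ _ => by ring

lemma Hproj_add_smul (g : (Fin 3 → ℝ) → Matrix (Fin 3) (Fin 3) ℝ) (U Z : (Fin 3 → ℝ) → Fin 3 → ℝ)
    (x : Fin 3 → ℝ) : Hproj g U Z x + (∑ j, flat g U j x * Z x j) • U x = Z x := by
  funext k
  simp [Hproj, sum_flat_mul]

section UnitField

variable {g : (Fin 3 → ℝ) → Matrix (Fin 3) (Fin 3) ℝ} {U : (Fin 3 → ℝ) → Fin 3 → ℝ}
  {x : Fin 3 → ℝ}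

lemma sum_metric_mul_eq_sum_flat_mul (hsymm : (g x).IsSymm) (Z : Fin 3 → ℝ) :
    ∑ i, ∑ j, g x i j * U x i * Z j = ∑ j, flat g U j x * Z j := by
  rw [sum_flat_mul, sum_comm]
  exact sum_congr rfl fun i _ => sum_congr rfl fun j _ => by rw [hsymm.apply j i]; ring

lemma UnitField.sum_flat_mul_self (hUunit : UnitField g U) (x : Fin 3 → ℝ) :
    ∑ j, flat g U j x * U x j = 1 :=
  (sum_flat_mul g U x (U x)).trans (hUunit x)

lemma UnitField.sum_flat_mul_Hproj (hUunit : UnitField g U) (Z : (Fin 3 → ℝ) → Fin 3 → ℝ)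
    (y : Fin 3 → ℝ) : ∑ j, flat g U j y * Hproj g U Z y j = 0 := by
  set c := ∑ i, ∑ j, g y i j * Z y i * U y j
  have hsplit : ∀ j, flat g U j y * Hproj g U Z y j
      = flat g U j y * Z y j - c * (flat g U j y * U y j) := fun j => by
    simp only [Hproj]
    ring
  rw [sum_congr rfl fun j _ => hsplit j, sum_sub_distrib, ← mul_sum, hUunit.sum_flat_mul_self,
    sum_flat_mul, mul_one, sub_self]

variable (hg : ∀ i j, DifferentiableAt ℝ (fun y => g y i j) x)
  (hU : ∀ j, DifferentiableAt ℝ (fun y => U y j) x)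
include hg hU

lemma differentiableAt_flat (k : Fin 3) : DifferentiableAt ℝ (flat g U k) x :=
  DifferentiableAt.fun_sum fun m _ => (hg k m).fun_mul (hU m)

lemma differentiableAt_Hproj {Z : (Fin 3 → ℝ) → Fin 3 → ℝ}
    (hZ : ∀ j, DifferentiableAt ℝ (fun y => Z y j) x) (k : Fin 3) :
    DifferentiableAt ℝ (fun y => Hproj g U Z y k) x :=
  (hZ k).sub <| (DifferentiableAt.fun_sum fun i _ => DifferentiableAt.fun_sum fun j _ =>
    ((hg i j).fun_mul (hZ i)).fun_mul (hU j)).fun_mul (hU k)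

lemma pd_flat (k i : Fin 3) :
    pd (flat g U k) i x =
      ∑ m, (pd (fun y => g y k m) i x * U x m + g x k m * pd (fun y => U y m) i x) :=
  pd_sum_mul (fun m => hg k m) hU i

lemma UnitField.sum_pd_metric_mul_mul (hUunit : UnitField g U) (k : Fin 3) :
    ∑ i, ∑ j, (pd (fun y => g y i j) k x * U x i * U x j
      + g x i j * pd (fun y => U y i) k x * U x j
      + g x i j * U x i * pd (fun y => U y j) k x) = 0 := by
  have hconst : pd (fun y => ∑ i, ∑ j, g y i j * U y i * U y j) k x = 0 := by
    rw [funext hUunit, pd_const]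
  rw [← hconst, pd_sum fun i _ => DifferentiableAt.fun_sum fun j _ =>
    ((hg i j).fun_mul (hU i)).fun_mul (hU j)]
  refine sum_congr rfl fun i _ => ?_
  rw [pd_sum fun j _ => ((hg i j).fun_mul (hU i)).fun_mul (hU j)]
  refine sum_congr rfl fun j _ => ?_
  rw [pd_mul ((hg i j).fun_mul (hU i)) (hU j), pd_mul (hg i j) (hU i)]
  ring

/-- `μ♭ = ι_U dθ`: contracting the Christoffel symbols with `g` gives the Koszul formula, and
differentiating `g(U,U) = 1` removes the remaining `g(U, ∇_Z U)` term. -/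
lemma flat_meanCurv (hdet : IsUnit (g x).det) (hsymm : (g x).IsSymm) (hUunit : UnitField g U)
    (k : Fin 3) :
    flat g (meanCurv g U) k x = ∑ i, U x i * (pd (flat g U k) i x - pd (flat g U i) k x) := by
  have hcovD : flat g (meanCurv g U) k x =
      ∑ m, g x k m * ∑ i, U x i * pd (fun y => U y m) i x
        + ∑ i, ∑ j, (∑ l, g x k l * christoffel g l i j x) * U x i * U x j := by
    simp only [flat, meanCurv, covD, mul_add, sum_add_distrib, mul_sum, sum_mul]
    congr 1
    rw [sum_comm]
    refine sum_congr rfl fun i _ => ?_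
    rw [sum_comm]
    exact sum_congr rfl fun j _ => sum_congr rfl fun l _ => by ring
  have hunit := hUunit.sum_pd_metric_mul_mul hg hU k
  have s10 : g x 1 0 = g x 0 1 := hsymm.apply 0 1
  have s20 : g x 2 0 = g x 0 2 := hsymm.apply 0 2
  have s21 : g x 2 1 = g x 1 2 := hsymm.apply 1 2
  rw [hcovD]
  simp only [sum_mul_christoffel hdet, pd_flat hg hU, Fin.sum_univ_three, s10, s20, s21] at hunit ⊢
  linear_combination (1 / 2 : ℝ) * hunit

lemma sum_flat_meanCurv_mul (hdet : IsUnit (g x).det) (hsymm : (g x).IsSymm)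
    (hUunit : UnitField g U) (Z : Fin 3 → ℝ) :
    ∑ k, flat g (meanCurv g U) k x * Z k = extDerivOneForm (flat g U) x (U x) Z := by
  simp only [flat_meanCurv hg hU hdet hsymm hUunit, extDerivOneForm_apply, sum_mul]
  rw [sum_comm]
  exact sum_congr rfl fun _ _ => sum_congr rfl fun _ _ => by ring

end UnitField

theorem dtheta_eq_integrability_form_minus_wedge_general
    (g : (Fin 3 → ℝ) → Matrix (Fin 3) (Fin 3) ℝ)
    (U : (Fin 3 → ℝ) → Fin 3 → ℝ)
    (hg : IsMetric g)
    (hU : SmoothVF U) (hUunit : UnitField g U) :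
    ∀ E F : (Fin 3 → ℝ) → Fin 3 → ℝ, SmoothVF E → SmoothVF F →
      ∀ x,
        (∑ i, ∑ j, E x i * F x j *
            (pd (fun y => flat g U j y) i x - pd (fun y => flat g U i y) j x)) =
        -(∑ i, ∑ j, g x i j * U x i * bracket (Hproj g U E) (Hproj g U F) x j)
          - ((∑ i, flat g (meanCurv g U) i x * E x i) * (∑ j, flat g U j x * F x j)
              - (∑ i, flat g (meanCurv g U) i x * F x i) * (∑ j, flat g U j x * E x j)) := by
  intro E F hE hF x
  have hgx := fun i j => hg.differentiableAt i j x
  have hUx := fun j => hU.differentiableAt j x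
  obtain ⟨hsymm, hpos⟩ := hg.2 x
  have hdet : IsUnit (g x).det := (Matrix.isUnit_iff_isUnit_det _).mp hpos.isUnit
  have hAlt := isAlt_extDerivOneForm (flat g U) (x := x)
  have hcartan : extDerivOneForm (flat g U) x (Hproj g U E x) (Hproj g U F x) =
      -∑ j, flat g U j x * bracket (Hproj g U E) (Hproj g U F) x j := by
    rw [extDerivOneForm_eq_sub_sub_bracket (differentiableAt_flat hgx hUx)
      (differentiableAt_Hproj hgx hUx (hE.differentiableAt · x))
      (differentiableAt_Hproj hgx hUx (hF.differentiableAt · x)),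
      funext (hUunit.sum_flat_mul_Hproj E), funext (hUunit.sum_flat_mul_Hproj F)]
    simp [pd_const]
  refine (extDerivOneForm_apply (flat g U) (E x) (F x)).symm.trans ?_
  have hμ := sum_flat_meanCurv_mul hgx hUx hdet hsymm hUunit
  rw [sum_metric_mul_eq_sum_flat_mul hsymm, ← hcartan, hμ, hμ]
  -- freeze `θ(E)`, `θ(F)` so that the decompositions below rewrite only the bare `E x`, `F x`
  set a := ∑ j, flat g U j x * E x j
  set b := ∑ j, flat g U j x * F x j
  have hUleft : ∀ (Z : Fin 3 → ℝ) (c : ℝ),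
      extDerivOneForm (flat g U) x (U x) (Z + c • U x) = extDerivOneForm (flat g U) x (U x) Z := by
    intro Z c
    simp [hAlt.self_eq_zero]
  rw [← Hproj_add_smul g U E x, ← Hproj_add_smul g U F x, hAlt.apply_add_smul_apply_add_smul,
    hUleft, hUleft]
  ring

/-- For a submersive semi-conformal `φ : (M³,g) → (N²,h)` with unit vertical
field `U`, `θ = U♭`, `Ω = dθ`, and `Ω̃(E,F) = −g(U,[HE,HF])`, one has `Ω = Ω̃ − μ♭ ∧ θ`. -/
theorem dtheta_eq_integrability_form_minus_wedge
    (g : (Fin 3 → ℝ) → Matrix (Fin 3) (Fin 3) ℝ)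
    (h : (Fin 2 → ℝ) → Matrix (Fin 2) (Fin 2) ℝ)
    (φ : (Fin 3 → ℝ) → Fin 2 → ℝ) (lam : (Fin 3 → ℝ) → ℝ)
    (U : (Fin 3 → ℝ) → Fin 3 → ℝ)
    (hg : IsMetric g) (hh : IsMetric h)
    (hφ : ∀ α, ContDiff ℝ (⊤ : ℕ∞) fun x => φ x α)
    (hlam : ContDiff ℝ (⊤ : ℕ∞) lam) (hlampos : ∀ x, 0 < lam x)
    (hsc : SemiConformal g h φ lam)
    (hU : SmoothVF U) (hUvert : Vertical φ U) (hUunit : UnitField g U) :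
    ∀ E F : (Fin 3 → ℝ) → Fin 3 → ℝ, SmoothVF E → SmoothVF F →
      ∀ x,
        (∑ i, ∑ j, E x i * F x j *
            (pd (fun y => flat g U j y) i x - pd (fun y => flat g U i y) j x)) =
        -(∑ i, ∑ j, g x i j * U x i * bracket (Hproj g U E) (Hproj g U F) x j)
          - ((∑ i, flat g (meanCurv g U) i x * E x i) * (∑ j, flat g U j x * F x j)
              - (∑ i, flat g (meanCurv g U) i x * F x i) * (∑ j, flat g U j x * E x j)) :=
  dtheta_eq_integrability_form_minus_wedge_general g U hg hU hUunit
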